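/- Let k be a field and let ĝ : ℝ → ℝ be the hat function ĝ(t) = 2·min(t, 1−t). Then the persistence module M_ĝ : P ⥤ ModuleCat k is indecomposable: whenever M_ĝ is isomorphic in the functor category to a biproduct A ⊞ B of two functors A, B : P ⥤ ModuleCat k, either A(p) = 0 for all p ∈ P or B(p) = 0 for all p ∈ P. -/

import Mathlib

/-! Every natural endomorphism of `M_g` is a scalar once `g` is bounded above on `[0, 1]`, say
by `C`. At `p₀ = (0, 1, C)` the sublevel set is the interval `[0, 1]`, so the component of an
endomorphism there is a scalar `c`. Every basis vector `[t]` of any `M_g(p)` is the image of the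
one-dimensional module `M_g(t, t, g t)`, whose structure map into `M_g(p₀)` is injective; by
naturality the endomorphism acts on `[t]` by `c` as well. Idempotent endomorphisms of `M_ĝ` are
therefore `0` or `1`, which rules out a nontrivial biproduct decomposition. -/

open CategoryTheory

noncomputable section

/-- The map induced on connected components by an inclusion of subspaces. -/
def compMap {Y : Type} [TopologicalSpace Y] {A B : Set Y} (h : A ⊆ B) :
    ConnectedComponents A → ConnectedComponents B :=
  (continuous_inclusion h).connectedComponentsMap

lemma compMap_id {Y : Type} [TopologicalSpace Y] {A : Set Y} (h : A ⊆ A) :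
    compMap h = id := by
  funext x
  obtain ⟨y, rfl⟩ := ConnectedComponents.surjective_coe x
  rfl

lemma compMap_comp {Y : Type} [TopologicalSpace Y] {A B C : Set Y}
    (hAB : A ⊆ B) (hBC : B ⊆ C) (hAC : A ⊆ C) :
    compMap hAC = compMap hBC ∘ compMap hAB := by
  funext x
  obtain ⟨y, rfl⟩ := ConnectedComponents.surjective_coe x
  rfl

/-- The persistence module (valued in free `k`-modules on connected components)
associated to a monotone family of subspaces indexed by a poset: it assigns to `p`
the free `k`-module on the set of connected components of `A p`, and to each
relation `p ≤ q` the `k`-linear map sending the basis element of a connected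
component of `A p` to the basis element of the connected component of `A q`
containing it. -/
def compFunctor (k : Type) [Field k] {α : Type} [Preorder α] {Y : Type} [TopologicalSpace Y]
    (A : α → Set Y) (mono : Monotone A) : α ⥤ ModuleCat k where
  obj p := ModuleCat.of k (ConnectedComponents (A p) →₀ k)
  map {p q} h := ModuleCat.ofHom (Finsupp.lmapDomain k k (compMap (mono (leOfHom h))))
  map_id p := by
    apply ModuleCat.hom_ext
    show Finsupp.lmapDomain k k _ = _
    rw [compMap_id]; exact Finsupp.lmapDomain_id _ _
  map_comp {p q r} f g := by
    apply ModuleCat.hom_ext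
    show Finsupp.lmapDomain k k _ = _
    rw [compMap_comp (mono (leOfHom f)) (mono (leOfHom g))]
    exact Finsupp.lmapDomain_comp _ _ _ _

/-- The sublevel set `S(a,b,c) = {t ∈ ℝ : a ≤ t ≤ b and g t ≤ c}`. -/
def Slev (g : ℝ → ℝ) (a b c : ℝ) : Set ℝ := {t : ℝ | a ≤ t ∧ t ≤ b ∧ g t ≤ c}

/-- The indexing poset `P = {(a,b,c) ∈ ℝ³ : 0 ≤ a ≤ b ≤ 1}` with
`(a,b,c) ⊑ (a',b',c')` iff `a' ≤ a`, `b ≤ b'` and `c ≤ c'`. -/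
def PP : Type := {p : ℝ × ℝ × ℝ // 0 ≤ p.1 ∧ p.1 ≤ p.2.1 ∧ p.2.1 ≤ 1}

namespace PP

instance : PartialOrder PP where
  le p q := q.1.1 ≤ p.1.1 ∧ p.1.2.1 ≤ q.1.2.1 ∧ p.1.2.2 ≤ q.1.2.2
  le_refl p := ⟨le_refl _, le_refl _, le_refl _⟩
  le_trans p q r h h' := ⟨h'.1.trans h.1, h.2.1.trans h'.2.1, h.2.2.trans h'.2.2⟩
  le_antisymm p q h h' :=
    Subtype.ext (Prod.ext (le_antisymm h'.1 h.1)
      (Prod.ext (le_antisymm h.2.1 h'.2.1) (le_antisymm h.2.2 h'.2.2)))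

/-- The coordinate `a` of a point of `P`. -/
def a (p : PP) : ℝ := p.1.1
/-- The coordinate `b` of a point of `P`. -/
def b (p : PP) : ℝ := p.1.2.1
/-- The coordinate `c` of a point of `P`. -/
def c (p : PP) : ℝ := p.1.2.2

lemma le_def {p q : PP} : p ≤ q ↔ q.a ≤ p.a ∧ p.b ≤ q.b ∧ p.c ≤ q.c := Iff.rfl

end PP

lemma Slev_mono (g : ℝ → ℝ) : Monotone (fun p : PP => Slev g p.a p.b p.c) :=
  fun _ _ h _ ht => ⟨h.1.trans ht.1, ht.2.1.trans h.2.1, ht.2.2.trans h.2.2⟩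

/-- The persistence module `M_g : P ⥤ ModuleCat k` of a function `g : ℝ → ℝ`:
it assigns to `(a,b,c) ∈ P` the free `k`-module on the set of connected components of
the sublevel set `S(a,b,c)`, and to each relation `(a,b,c) ⊑ (a',b',c')` the `k`-linear
map sending the basis element corresponding to a component `C` of `S(a,b,c)` to the basis
element corresponding to the unique component of `S(a',b',c')` containing `C`. -/
def Mg (k : Type) [Field k] (g : ℝ → ℝ) : PP ⥤ ModuleCat k :=
  compFunctor k (fun p : PP => Slev g p.a p.b p.c) (Slev_mono g)

/-- The hat function `ĝ(t) = 2·min(t, 1−t)`. -/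
def hatg (t : ℝ) : ℝ := 2 * min t (1 - t)


open Limits

theorem eq_zero_or_eq_id_of_idempotent_of_eq_smul_id {C k : Type*} [Category C] [Preadditive C]
    [Field k] [Linear k C] {X : C} {e : X ⟶ X} (he : e ≫ e = e) {c : k} (hc : e = c • 𝟙 X) :
    e = 0 ∨ e = 𝟙 X := by
  by_cases hX : 𝟙 X = 0
  · left
    rw [← Category.comp_id e, hX, comp_zero]
  have hc' : (c * (c - 1)) • 𝟙 X = 0 := by
    rw [mul_sub, mul_one, sub_smul, mul_smul, sub_eq_zero]
    simpa [hc] using he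
  rcases mul_eq_zero.mp ((smul_eq_zero.mp hc').resolve_right hX) with h0 | h1
  · exact Or.inl (by simp [hc, h0])
  · exact Or.inr (by simp [hc, sub_eq_zero.mp h1])

theorem isZero_or_isZero_of_iso_biprod {C : Type*} [Category C] [HasZeroMorphisms C]
    [HasBinaryBiproducts C] {X Y Z : C} (i : X ≅ Y ⊞ Z)
    (hX : ∀ e : X ⟶ X, e ≫ e = e → e = 0 ∨ e = 𝟙 X) : IsZero Y ∨ IsZero Z := by
  set e := i.hom ≫ biprod.fst ≫ biprod.inl ≫ i.inv
  have hfst : (biprod.fst ≫ biprod.inl : Y ⊞ Z ⟶ Y ⊞ Z) = i.inv ≫ e ≫ i.hom := by simp [e]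
  rcases hX e (by simp [e]) with he | he
  · left
    rw [IsZero.iff_id_eq_zero]
    calc 𝟙 Y = biprod.inl ≫ (biprod.fst ≫ biprod.inl) ≫ biprod.fst := by simp
      _ = 0 := by rw [hfst, he]; simp
  · right
    rw [IsZero.iff_id_eq_zero]
    calc 𝟙 Z = biprod.inr ≫ (biprod.fst ≫ biprod.inl) ≫ biprod.snd := by rw [hfst, he]; simp
      _ = 0 := by simp

theorem LinearMap.exists_eq_smul_id_of_subsingleton {R ι : Type*} [CommSemiring R]
    [Subsingleton ι] (f : (ι →₀ R) →ₗ[R] (ι →₀ R)) : ∃ c : R, f = c • LinearMap.id := by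
  rcases isEmpty_or_nonempty ι with hι | ⟨⟨x⟩⟩
  · exact ⟨0, Subsingleton.elim _ _⟩
  refine ⟨f (Finsupp.single x 1) x, Finsupp.lhom_ext' fun a => LinearMap.ext_ring ?_⟩
  obtain rfl := Subsingleton.elim a x
  ext y
  obtain rfl := Subsingleton.elim y a
  simp

section compFunctor

variable {k : Type} [Field k] {α : Type} [Preorder α] {Y : Type} [TopologicalSpace Y]
  {A : α → Set Y} {mono : Monotone A}

lemma compFunctor_map_single {p q : α} (f : p ⟶ q) (x : A p) (c : k) :
    (compFunctor k A mono).map f (Finsupp.single (ConnectedComponents.mk x) c) =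
      Finsupp.single (ConnectedComponents.mk (Set.inclusion (mono (leOfHom f)) x)) c :=
  Finsupp.mapDomain_single

lemma compFunctor_map_mono {p q : α} (f : p ⟶ q) (hp : IsPreconnected (A p)) :
    Mono ((compFunctor k A mono).map f) := by
  have := isPreconnected_iff_preconnectedSpace.mp hp
  rw [ModuleCat.mono_iff_injective]
  exact Finsupp.mapDomain_injective (Function.injective_of_subsingleton _)

lemma compFunctor_obj_exists_eq_smul_id {p : α} (hp : IsPreconnected (A p))
    (φ : (compFunctor k A mono).obj p ⟶ (compFunctor k A mono).obj p) :
    ∃ c : k, φ = c • 𝟙 _ := by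
  have := isPreconnected_iff_preconnectedSpace.mp hp
  obtain ⟨c, hc⟩ := LinearMap.exists_eq_smul_id_of_subsingleton φ.hom
  exact ⟨c, ModuleCat.hom_ext hc⟩

theorem compFunctor_natTrans_ext {p₀ : α}
    (hA : ∀ p, ∀ t ∈ A p, ∃ r, r ≤ p ∧ r ≤ p₀ ∧ t ∈ A r ∧ IsPreconnected (A r))
    {φ ψ : compFunctor k A mono ⟶ compFunctor k A mono} (h : φ.app p₀ = ψ.app p₀) : φ = ψ := by
  ext p : 2
  refine ModuleCat.hom_ext (Finsupp.lhom_ext fun x b => ?_)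
  obtain ⟨⟨t, ht⟩, rfl⟩ := ConnectedComponents.surjective_coe x
  obtain ⟨r, hrp, hr₀, htr, hr⟩ := hA p t ht
  have hφψ : φ.app r = ψ.app r := by
    have : Mono ((compFunctor k A mono).map (homOfLE hr₀)) := compFunctor_map_mono _ hr
    rw [← cancel_mono ((compFunctor k A mono).map (homOfLE hr₀)), ← φ.naturality,
      ← ψ.naturality, h]
  have hp : (compFunctor k A mono).map (homOfLE hrp) ≫ φ.app p =
      (compFunctor k A mono).map (homOfLE hrp) ≫ ψ.app p := by
    rw [φ.naturality, ψ.naturality, hφψ]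
  -- the basis vector is typed in the `ModuleCat` object so that `ModuleCat.comp_apply` applies
  have := congr($hp (show (compFunctor k A mono).obj r from
    Finsupp.single (ConnectedComponents.mk ⟨t, htr⟩) b))
  rwa [ModuleCat.comp_apply, ModuleCat.comp_apply, compFunctor_map_single] at this

theorem compFunctor_exists_eq_smul_id {p₀ : α} (h₀ : IsPreconnected (A p₀))
    (hA : ∀ p, ∀ t ∈ A p, ∃ r, r ≤ p ∧ r ≤ p₀ ∧ t ∈ A r ∧ IsPreconnected (A r))
    (φ : compFunctor k A mono ⟶ compFunctor k A mono) : ∃ c : k, φ = c • 𝟙 _ := by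
  obtain ⟨c, hc⟩ := compFunctor_obj_exists_eq_smul_id h₀ (φ.app p₀)
  exact ⟨c, compFunctor_natTrans_ext hA (by rw [hc, NatTrans.app_smul, NatTrans.id_app])⟩

end compFunctor

lemma Slev_eq_singleton (g : ℝ → ℝ) (t : ℝ) : Slev g t t (g t) = {t} := by
  ext s
  refine ⟨fun ⟨h₁, h₂, _⟩ => le_antisymm h₂ h₁, ?_⟩
  rintro rfl
  exact ⟨le_rfl, le_rfl, le_rfl⟩

theorem Mg_exists_eq_smul_id (k : Type) [Field k] {g : ℝ → ℝ} (hg : BddAbove (g '' Set.Icc 0 1))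
    (φ : Mg k g ⟶ Mg k g) : ∃ c : k, φ = c • 𝟙 _ := by
  obtain ⟨C, hC⟩ := hg
  let p₀ : PP := ⟨(0, 1, C), by norm_num⟩
  have hS₀ : Slev g p₀.a p₀.b p₀.c = Set.Icc 0 1 := by
    ext t
    exact ⟨fun ht => ⟨ht.1, ht.2.1⟩, fun ht => ⟨ht.1, ht.2, hC ⟨t, ht, rfl⟩⟩⟩
  refine compFunctor_exists_eq_smul_id (p₀ := p₀) (by rw [hS₀]; exact isPreconnected_Icc) ?_ φ
  rintro p t ⟨hta, htb, hgt⟩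
  have ht₀ : 0 ≤ t := p.2.1.trans hta
  have ht₁ : t ≤ 1 := htb.trans p.2.2.2
  let r : PP := ⟨(t, t, g t), ht₀, le_rfl, ht₁⟩
  have hSr : Slev g r.a r.b r.c = {t} := Slev_eq_singleton g t
  refine ⟨r, ⟨hta, htb, hgt⟩, ⟨ht₀, ht₁, hC ⟨t, ⟨ht₀, ht₁⟩, rfl⟩⟩, ⟨le_rfl, le_rfl, le_rfl⟩, ?_⟩
  exact hSr ▸ isPreconnected_singleton

lemma hatg_le_one (t : ℝ) : hatg t ≤ 1 := by
  unfold hatg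
  linarith [min_le_left t (1 - t), min_le_right t (1 - t)]

/-- **Indecomposability of the persistence module of the hat function.**
The persistence module `M_ĝ : P ⥤ ModuleCat k` of the hat function
`ĝ(t) = 2·min(t, 1−t)` is indecomposable: whenever `M_ĝ` is isomorphic in the
functor category to a biproduct `A ⊞ B`, either `A` is pointwise zero or `B` is
pointwise zero. -/
theorem Mg_hat_indecomposable (k : Type) [Field k]
    (A B : PP ⥤ ModuleCat k) (h : Mg k hatg ≅ A ⊞ B) :
    (∀ p : PP, Limits.IsZero (A.obj p)) ∨ (∀ p : PP, Limits.IsZero (B.obj p)) := by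
  have hbdd : BddAbove (hatg '' Set.Icc 0 1) := ⟨1, by rintro _ ⟨t, -, rfl⟩; exact hatg_le_one t⟩
  refine (isZero_or_isZero_of_iso_biprod h fun e he => ?_).imp (fun hA => hA.obj) (fun hB => hB.obj)
  obtain ⟨c, hc⟩ := Mg_exists_eq_smul_id k hbdd e
  exact eq_zero_or_eq_id_of_idempotent_of_eq_smul_id he hc

end
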